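/- arXiv:1808.05274 — 4 statements merged into one kernel-verified Lean document; each statement's English description precedes it below -/
import Mathlib

section
/- Let f : ℝ^n → ℝ be convex, differentiable, and L-smooth, let Ω ⊆ ℝ^n be a nonempty compact convex set of diameter at most D, let x* ∈ Ω minimize f over Ω, and fix δ > 0. Suppose x ∈ Ω, γ ∈ (0, 1], and v ∈ Ω satisfies ⟨∇f(x), v⟩ ≤ min_{u ∈ Ω} ⟨∇f(x), u⟩ + (L D²/2) γ δ. Then the point x⁺ = (1 − γ) x + γ v lies in Ω and satisfies f(x⁺) − f(x*) ≤ (1 − γ)(f(x) − f(x*)) + (L D²/2) γ² (1 + δ). -/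
/-!
Smoothness gives the descent bound `f x⁺ ≤ f x + γ ⟪∇f x, v - x⟫ + L γ² ‖v - x‖² / 2`. Splitting
`v - x = (v - x*) + (x* - x)`, convexity bounds `⟪∇f x, x* - x⟫` by `f x* - f x`, which produces
the contraction factor `1 - γ`, and the oracle bounds `⟪∇f x, v - x*⟫` by its slack `(L D²/2) γ δ`.
-/

open scoped InnerProductSpace Gradient
open Set AffineMap

theorem le_add_deriv_add_of_deriv_sub_le {φ φ' : ℝ → ℝ} {K : ℝ}
    (hφ : ∀ s, HasDerivAt φ (φ' s) s) (hK : ∀ s ∈ Ico (0 : ℝ) 1, φ' s - φ' 0 ≤ K * s) :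
    φ 1 ≤ φ 0 + φ' 0 + K / 2 := by
  have key := image_le_of_deriv_right_le_deriv_boundary
    (f := fun s => φ s - s * φ' 0) (f' := fun s => φ' s - φ' 0)
    (B := fun s => φ 0 + K / 2 * s ^ 2) (B' := fun s => K * s) (a := 0) (b := 1)
    (fun s _ => ((hφ s).sub (hasDerivAt_mul_const _)).continuousAt.continuousWithinAt)
    (fun s _ => ((hφ s).sub (hasDerivAt_mul_const (φ' 0))).hasDerivWithinAt)
    (by simp)
    (by fun_prop)
    (fun s _ => ((((hasDerivAt_pow 2 s).const_mul (K / 2)).const_add (φ 0)).congr_deriv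
      (by ring)).hasDerivWithinAt)
    hK (right_mem_Icc.2 zero_le_one)
  linarith

variable {F : Type*} [NormedAddCommGroup F] [InnerProductSpace ℝ F] [CompleteSpace F]
  {f : F → ℝ}

theorem HasGradientAt.hasDerivAt_comp_lineMap {g x y : F} {t : ℝ}
    (h : HasGradientAt f g (lineMap x y t)) :
    HasDerivAt (fun s => f (lineMap x y s)) ⟪g, y - x⟫_ℝ t :=
  (hasGradientAt_iff_hasFDerivAt.mp h).comp_hasDerivAt t hasDerivAt_lineMap

theorem ConvexOn.add_inner_gradient_le {s : Set F} {x y : F} (hf : ConvexOn ℝ s f)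
    (hx : x ∈ s) (hy : y ∈ s) (hfx : DifferentiableAt ℝ f x) :
    f x + ⟪∇ f x, y - x⟫_ℝ ≤ f y := by
  have hline : ConvexOn ℝ (Icc 0 1) (fun t : ℝ => f (lineMap x y t)) :=
    (hf.comp_affineMap (lineMap x y)).subset
      (fun t ht => hf.1.lineMap_mem hx hy ht) (convex_Icc 0 1)
  have hderiv : HasDerivAt (fun t : ℝ => f (lineMap x y t)) ⟪∇ f x, y - x⟫_ℝ 0 :=
    HasGradientAt.hasDerivAt_comp_lineMap (by rw [lineMap_apply_zero]; exact hfx.hasGradientAt)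
  have := hline.le_slope_of_hasDerivAt (left_mem_Icc.2 zero_le_one)
    (right_mem_Icc.2 zero_le_one) one_pos hderiv
  simp only [slope_def_field, lineMap_apply_zero, lineMap_apply_one, sub_zero, div_one] at this
  linarith

theorem le_add_inner_gradient_add_of_norm_gradient_sub_le {L : ℝ} (hf : Differentiable ℝ f)
    (hL : ∀ x y, ‖∇ f x - ∇ f y‖ ≤ L * ‖x - y‖) (x y : F) :
    f y ≤ f x + ⟪∇ f x, y - x⟫_ℝ + L / 2 * ‖y - x‖ ^ 2 := by
  have hK : ∀ s ∈ Ico (0 : ℝ) 1,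
      ⟪∇ f (lineMap x y s), y - x⟫_ℝ - ⟪∇ f (lineMap x y (0 : ℝ)), y - x⟫_ℝ ≤
        L * ‖y - x‖ ^ 2 * s := by
    intro s hs
    have hdist : ‖lineMap x y s - x‖ = s * ‖y - x‖ := by
      rw [← vsub_eq_sub, lineMap_vsub_left, norm_smul, Real.norm_of_nonneg hs.1, vsub_eq_sub]
    calc ⟪∇ f (lineMap x y s), y - x⟫_ℝ - ⟪∇ f (lineMap x y (0 : ℝ)), y - x⟫_ℝ
        = ⟪∇ f (lineMap x y s) - ∇ f x, y - x⟫_ℝ := by rw [inner_sub_left, lineMap_apply_zero]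
      _ ≤ ‖∇ f (lineMap x y s) - ∇ f x‖ * ‖y - x‖ := real_inner_le_norm _ _
      _ ≤ L * ‖lineMap x y s - x‖ * ‖y - x‖ := by gcongr; exact hL _ _
      _ = L * ‖y - x‖ ^ 2 * s := by rw [hdist]; ring
  have := le_add_deriv_add_of_deriv_sub_le
    (fun s => (hf _).hasGradientAt.hasDerivAt_comp_lineMap) hK
  simp only [lineMap_apply_zero, lineMap_apply_one] at this
  linarith

theorem frankWolfe_step_sub_le {L γ : ℝ} {s : Set F} {x v z : F} (hconv : ConvexOn ℝ s f)
    (hdiff : Differentiable ℝ f) (hL : ∀ x y, ‖∇ f x - ∇ f y‖ ≤ L * ‖x - y‖)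
    (hx : x ∈ s) (hz : z ∈ s) (hγ : 0 ≤ γ) :
    f ((1 - γ) • x + γ • v) - f z ≤
      (1 - γ) * (f x - f z) + γ * ⟪∇ f x, v - z⟫_ℝ + L / 2 * γ ^ 2 * ‖v - x‖ ^ 2 := by
  have hstep : (1 - γ) • x + γ • v - x = γ • (v - x) := by module
  have hdescent := le_add_inner_gradient_add_of_norm_gradient_sub_le hdiff hL x
    ((1 - γ) • x + γ • v)
  rw [hstep, inner_smul_right, norm_smul, Real.norm_of_nonneg hγ, mul_pow] at hdescent
  have hgrad := hconv.add_inner_gradient_le hx hz (hdiff x)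
  have hsplit : ⟪∇ f x, v - x⟫_ℝ = ⟪∇ f x, v - z⟫_ℝ + ⟪∇ f x, z - x⟫_ℝ := by
    rw [← inner_add_right, sub_add_sub_cancel]
  rw [hsplit] at hdescent
  linarith [mul_le_mul_of_nonneg_left hgrad hγ]

theorem frankWolfe_one_step_descent_general {n : ℕ}
    (f : EuclideanSpace ℝ (Fin n) → ℝ) (L : ℝ)
    (hconv : ConvexOn ℝ Set.univ f) (hdiff : Differentiable ℝ f)
    (hsmooth : ∀ x y, ‖gradient f x - gradient f y‖ ≤ L * ‖x - y‖)
    (Ω : Set (EuclideanSpace ℝ (Fin n)))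
    (hΩconv : Convex ℝ Ω)
    (D : ℝ) (hD : ∀ x ∈ Ω, ∀ y ∈ Ω, ‖x - y‖ ≤ D)
    (xstar : EuclideanSpace ℝ (Fin n)) (hxstarΩ : xstar ∈ Ω)
    (δ : ℝ) (hδ : 0 < δ)
    (x : EuclideanSpace ℝ (Fin n)) (hx : x ∈ Ω)
    (γ : ℝ) (hγ0 : 0 < γ) (hγ1 : γ ≤ 1)
    (v : EuclideanSpace ℝ (Fin n)) (hv : v ∈ Ω)
    (hvapprox : ∀ u ∈ Ω,
      ⟪gradient f x, v⟫_ℝ ≤ ⟪gradient f x, u⟫_ℝ + (L * D ^ 2 / 2) * γ * δ) :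
    (1 - γ) • x + γ • v ∈ Ω ∧
      f ((1 - γ) • x + γ • v) - f xstar ≤
        (1 - γ) * (f x - f xstar) + (L * D ^ 2 / 2) * γ ^ 2 * (1 + δ) := by
  refine ⟨hΩconv hx hv (by linarith) hγ0.le (by ring), ?_⟩
  have hLD : 0 ≤ L * D ^ 2 := by
    have hslack : 0 ≤ L * D ^ 2 * (γ * δ) := by linarith [hvapprox v hv]
    exact nonneg_of_mul_nonneg_left hslack (by positivity)
  have hdist : L * ‖v - x‖ ^ 2 ≤ L * D ^ 2 := by
    have hvx : ‖v - x‖ ≤ D := hD v hv x hx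
    rcases le_or_gt 0 L with hL | hL
    · gcongr
    · have hD0 : D = 0 := pow_eq_zero_iff two_ne_zero |>.mp
        (le_antisymm (nonpos_of_mul_nonneg_right hLD hL) (sq_nonneg D))
      rw [le_antisymm (hD0 ▸ hvx) (norm_nonneg _), hD0]
  have hgap : ⟪gradient f x, v - xstar⟫_ℝ ≤ (L * D ^ 2 / 2) * γ * δ := by
    rw [inner_sub_right]
    linarith [hvapprox xstar hxstarΩ]
  have hstep := frankWolfe_step_sub_le (v := v) hconv hdiff hsmooth (mem_univ x) (mem_univ xstar)
    hγ0.le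
  linarith [mul_le_mul_of_nonneg_left hgap hγ0.le, mul_le_mul_of_nonneg_left hdist (sq_nonneg γ)]

/-- One-step descent inequality for Frank-Wolfe with an approximate
linear-minimization oracle. -/
theorem frankWolfe_one_step_descent {n : ℕ}
    (f : EuclideanSpace ℝ (Fin n) → ℝ) (L : ℝ)
    (hconv : ConvexOn ℝ Set.univ f) (hdiff : Differentiable ℝ f)
    (hsmooth : ∀ x y, ‖gradient f x - gradient f y‖ ≤ L * ‖x - y‖)
    (Ω : Set (EuclideanSpace ℝ (Fin n))) (hne : Ω.Nonempty)
    (hcomp : IsCompact Ω) (hΩconv : Convex ℝ Ω)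
    (D : ℝ) (hD : ∀ x ∈ Ω, ∀ y ∈ Ω, ‖x - y‖ ≤ D)
    (xstar : EuclideanSpace ℝ (Fin n)) (hxstarΩ : xstar ∈ Ω)
    (hmin : ∀ y ∈ Ω, f xstar ≤ f y)
    (δ : ℝ) (hδ : 0 < δ)
    (x : EuclideanSpace ℝ (Fin n)) (hx : x ∈ Ω)
    (γ : ℝ) (hγ0 : 0 < γ) (hγ1 : γ ≤ 1)
    (v : EuclideanSpace ℝ (Fin n)) (hv : v ∈ Ω)
    (hvapprox : ∀ u ∈ Ω,
      ⟪gradient f x, v⟫_ℝ ≤ ⟪gradient f x, u⟫_ℝ + (L * D ^ 2 / 2) * γ * δ) :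
    (1 - γ) • x + γ • v ∈ Ω ∧
      f ((1 - γ) • x + γ • v) - f xstar ≤
        (1 - γ) * (f x - f xstar) + (L * D ^ 2 / 2) * γ ^ 2 * (1 + δ) :=
  frankWolfe_one_step_descent_general f L hconv hdiff hsmooth Ω hΩconv D hD xstar hxstarΩ δ hδ x hx
    γ hγ0 hγ1 v hv hvapprox
end

section
/- Let f₁, …, f_n : ℝ^m → ℝ be convex and differentiable with L-Lipschitz gradients, set f = (1/n) Σᵢ fᵢ, let Ω ⊆ ℝ^m be convex, and let x* ∈ Ω minimize f over Ω (so ⟨∇f(x*), x − x*⟩ ≥ 0 for all x ∈ Ω). Then for every x ∈ Ω, (1/n) Σᵢ ‖∇fᵢ(x) − ∇fᵢ(x*)‖² ≤ 2L (f(x) − f(x*)). -/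
/-!
For a convex `g` with `L`-Lipschitz gradient, evaluating the descent lemma at `x` and the
supporting hyperplane at `y` in the point `z = x - L⁻¹ (∇g x - ∇g y)` gives co-coercivity
`‖∇g x - ∇g y‖² ≤ 2L (g x - g y - ⟪∇g y, x - y⟫)`. Averaging over the `fᵢ` turns the right-hand
side into `2L (f x - f x* - ⟪∇f x*, x - x*⟫)`, and first-order optimality drops the inner product.
-/

open scoped InnerProductSpace

section
variable {E : Type*} [NormedAddCommGroup E] [InnerProductSpace ℝ E] [CompleteSpace E]
  {g : E → ℝ}

theorem hasDerivAt_apply_add_smul {x d : E} {t : ℝ} (hg : DifferentiableAt ℝ g (x + t • d)) :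
    HasDerivAt (fun s : ℝ => g (x + s • d)) ⟪gradient g (x + t • d), d⟫_ℝ t := by
  have hline : HasDerivAt (fun s : ℝ => x + s • d) d t := by
    simpa using ((hasDerivAt_id t).smul_const d).const_add x
  rw [inner_gradient_left]
  exact hg.hasFDerivAt.comp_hasDerivAt t hline

theorem ConvexOn.inner_gradient_le_sub {s : Set E} (hconv : ConvexOn ℝ s g) {y z : E}
    (hy : y ∈ s) (hz : z ∈ s) (hg : DifferentiableAt ℝ g y) :
    ⟪gradient g y, z - y⟫_ℝ ≤ g z - g y := by
  have hderiv : HasDerivAt (g ∘ AffineMap.lineMap (k := ℝ) y z) ⟪gradient g y, z - y⟫_ℝ 0 := by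
    have := hasDerivAt_apply_add_smul (x := y) (d := z - y) (t := 0) (by simpa using hg)
    simpa only [Function.comp_def, AffineMap.lineMap_apply_module', add_comm _ y, zero_smul,
      add_zero] using this
  have := (hconv.comp_affineMap (AffineMap.lineMap y z)).le_slope_of_hasDerivAt
    (by simpa using hy) (by simpa using hz) zero_lt_one hderiv
  simpa [slope_def_field] using this

theorem apply_le_add_inner_gradient_add_sq_norm (hg : Differentiable ℝ g) {L : ℝ}
    (hlip : ∀ a b, ‖gradient g a - gradient g b‖ ≤ L * ‖a - b‖) (x z : E) :
    g z ≤ g x + ⟪gradient g x, z - x⟫_ℝ + L / 2 * ‖z - x‖ ^ 2 := by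
  set d := z - x
  set ψ : ℝ → ℝ := fun t => g (x + t • d) - t * ⟪gradient g x, d⟫_ℝ - L / 2 * t ^ 2 * ‖d‖ ^ 2
  have hψ : ∀ t : ℝ, HasDerivAt ψ
      (⟪gradient g (x + t • d) - gradient g x, d⟫_ℝ - L * t * ‖d‖ ^ 2) t := fun t => by
    have h₁ := hasDerivAt_apply_add_smul (x := x) (d := d) (hg (x + t • d))
    have h₂ := (hasDerivAt_id' t).mul_const ⟪gradient g x, d⟫_ℝ
    have h₃ := ((hasDerivAt_pow 2 t).const_mul (L / 2)).mul_const (‖d‖ ^ 2)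
    refine ((h₁.sub h₂).sub h₃).congr_deriv ?_
    rw [inner_sub_left]
    push_cast
    ring
  have hψ_nonpos : ∀ t ∈ interior (Set.Icc (0 : ℝ) 1),
      ⟪gradient g (x + t • d) - gradient g x, d⟫_ℝ - L * t * ‖d‖ ^ 2 ≤ 0 := by
    intro t ht
    rw [interior_Icc] at ht
    calc ⟪gradient g (x + t • d) - gradient g x, d⟫_ℝ - L * t * ‖d‖ ^ 2
        ≤ ‖gradient g (x + t • d) - gradient g x‖ * ‖d‖ - L * t * ‖d‖ ^ 2 := by
          gcongr; exact real_inner_le_norm _ _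
      _ ≤ L * ‖t • d‖ * ‖d‖ - L * t * ‖d‖ ^ 2 := by
          gcongr; simpa using hlip (x + t • d) x
      _ = 0 := by rw [norm_smul, Real.norm_of_nonneg ht.1.le]; ring
  have hanti : AntitoneOn ψ (Set.Icc 0 1) :=
    antitoneOn_of_hasDerivWithinAt_nonpos (convex_Icc 0 1)
      (fun t _ => (hψ t).continuousAt.continuousWithinAt)
      (fun t _ => (hψ t).hasDerivWithinAt) hψ_nonpos
  have := hanti (by simp) (by simp) zero_le_one
  simp only [ψ, d, zero_smul, add_zero, one_smul, add_sub_cancel, zero_mul, one_mul, mul_one,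
    sub_zero, one_pow, ne_eq, OfNat.ofNat_ne_zero, not_false_eq_true, zero_pow, mul_zero] at this
  linarith

theorem ConvexOn.norm_gradient_sub_sq_le (hconv : ConvexOn ℝ Set.univ g)
    (hg : Differentiable ℝ g) {L : ℝ} (hL : 0 ≤ L)
    (hlip : ∀ a b, ‖gradient g a - gradient g b‖ ≤ L * ‖a - b‖) (x y : E) :
    ‖gradient g x - gradient g y‖ ^ 2 ≤ 2 * L * (g x - g y - ⟪gradient g y, x - y⟫_ℝ) := by
  obtain rfl | hL := hL.eq_or_lt
  · have : gradient g x - gradient g y = 0 := norm_le_zero_iff.mp (by simpa using hlip x y)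
    simp [this]
  set u := gradient g x - gradient g y
  have hdescent := apply_le_add_inner_gradient_add_sq_norm hg hlip x (x - L⁻¹ • u)
  have hsupport := hconv.inner_gradient_le_sub (Set.mem_univ y) (Set.mem_univ (x - L⁻¹ • u))
    (hg y)
  have hu : L⁻¹ * ⟪gradient g x, u⟫_ℝ - L⁻¹ * ⟪gradient g y, u⟫_ℝ = L⁻¹ * ‖u‖ ^ 2 := by
    rw [← mul_sub, ← inner_sub_left, real_inner_self_eq_norm_sq]
  have hquad : L / 2 * ‖x - L⁻¹ • u - x‖ ^ 2 = L⁻¹ * ‖u‖ ^ 2 / 2 := by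
    rw [sub_sub_cancel_left, norm_neg, norm_smul, Real.norm_of_nonneg (inv_nonneg.mpr hL.le)]
    field_simp
  rw [hquad, sub_sub_cancel_left, inner_neg_right, real_inner_smul_right] at hdescent
  rw [sub_right_comm, inner_sub_right, real_inner_smul_right] at hsupport
  calc ‖u‖ ^ 2 = 2 * L * (L⁻¹ * ‖u‖ ^ 2 / 2) := by field_simp
    _ ≤ 2 * L * (g x - g y - ⟪gradient g y, x - y⟫_ℝ) := by gcongr; linarith

theorem gradient_const_mul_sum {ι : Type*} (s : Finset ι) {f : ι → E → ℝ} {x : E}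
    (hf : ∀ i ∈ s, DifferentiableAt ℝ (f i) x) (c : ℝ) :
    gradient (fun y => c * ∑ i ∈ s, f i y) x = c • ∑ i ∈ s, gradient (f i) x := by
  refine HasGradientAt.gradient (hasGradientAt_iff_hasFDerivAt.mpr ?_)
  rw [map_smul, map_sum]
  simp only [toDual_gradient]
  exact (HasFDerivAt.fun_sum fun i hi => (hf i hi).hasFDerivAt).const_mul c

end

theorem mean_sq_gradient_deviation_general {m n : ℕ}
    (f : Fin n → EuclideanSpace ℝ (Fin m) → ℝ) (L : ℝ)
    (hconv : ∀ i, ConvexOn ℝ Set.univ (f i))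
    (hdiff : ∀ i, Differentiable ℝ (f i))
    (hlip : ∀ i x y, ‖gradient (f i) x - gradient (f i) y‖ ≤ L * ‖x - y‖)
    (F : EuclideanSpace ℝ (Fin m) → ℝ)
    (hF : F = fun x => (1 / (n : ℝ)) * ∑ i, f i x)
    (Ω : Set (EuclideanSpace ℝ (Fin m)))
    (xstar : EuclideanSpace ℝ (Fin m))
    (hfoc : ∀ x ∈ Ω, 0 ≤ ⟪gradient F xstar, x - xstar⟫_ℝ) :
    ∀ x ∈ Ω,
      (1 / (n : ℝ)) * ∑ i, ‖gradient (f i) x - gradient (f i) xstar‖ ^ 2 ≤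
        2 * L * (F x - F xstar) := by
  intro x hx
  obtain rfl | hne := eq_or_ne x xstar
  · simp
  obtain hn | ⟨⟨i⟩⟩ := isEmpty_or_nonempty (Fin n)
  · simp [hF]
  have hL : 0 ≤ L := nonneg_of_mul_nonneg_left ((norm_nonneg _).trans (hlip i x xstar))
    (by simpa [sub_eq_zero] using hne)
  have hgradF : gradient F xstar = (1 / (n : ℝ)) • ∑ i, gradient (f i) xstar := by
    rw [hF]
    exact gradient_const_mul_sum _ (fun i _ => (hdiff i).differentiableAt) _
  calc (1 / (n : ℝ)) * ∑ i, ‖gradient (f i) x - gradient (f i) xstar‖ ^ 2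
      ≤ (1 / (n : ℝ)) * ∑ i, 2 * L * (f i x - f i xstar - ⟪gradient (f i) xstar, x - xstar⟫_ℝ) := by
        gcongr with i
        exact (hconv i).norm_gradient_sub_sq_le (hdiff i) hL (hlip i) x xstar
    _ = 2 * L * (F x - F xstar - ⟪gradient F xstar, x - xstar⟫_ℝ) := by
        rw [hgradF, real_inner_smul_left, sum_inner, hF]
        simp only [← Finset.mul_sum, Finset.sum_sub_distrib]
        ring
    _ ≤ 2 * L * (F x - F xstar) :=
        mul_le_mul_of_nonneg_left (sub_le_self _ (hfoc x hx)) (by positivity)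

/-- Mean squared gradient deviation at the optimum: if `F = (1/n) Σᵢ fᵢ` with each
`fᵢ` convex with `L`-Lipschitz gradient, and `x*` minimizes `F` over a convex set `Ω`
(so the first-order optimality condition holds), then for every `x ∈ Ω`,
`(1/n) Σᵢ ‖∇fᵢ(x) − ∇fᵢ(x*)‖² ≤ 2L (F x − F x*)`. -/
theorem mean_sq_gradient_deviation {m n : ℕ}
    (f : Fin n → EuclideanSpace ℝ (Fin m) → ℝ) (L : ℝ)
    (hconv : ∀ i, ConvexOn ℝ Set.univ (f i))
    (hdiff : ∀ i, Differentiable ℝ (f i))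
    (hlip : ∀ i x y, ‖gradient (f i) x - gradient (f i) y‖ ≤ L * ‖x - y‖)
    (F : EuclideanSpace ℝ (Fin m) → ℝ)
    (hF : F = fun x => (1 / (n : ℝ)) * ∑ i, f i x)
    (Ω : Set (EuclideanSpace ℝ (Fin m))) (hΩconv : Convex ℝ Ω)
    (xstar : EuclideanSpace ℝ (Fin m)) (hxstarΩ : xstar ∈ Ω)
    (hmin : ∀ x ∈ Ω, F xstar ≤ F x)
    (hfoc : ∀ x ∈ Ω, 0 ≤ ⟪gradient F xstar, x - xstar⟫_ℝ) :
    ∀ x ∈ Ω,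
      (1 / (n : ℝ)) * ∑ i, ‖gradient (f i) x - gradient (f i) xstar‖ ^ 2 ≤
        2 * L * (F x - F xstar) :=
  mean_sq_gradient_deviation_general f L hconv hdiff hlip F hF Ω xstar hfoc
end

section
/- Let C ≥ 0 and let (e_s)_{s ≥ 1} be a sequence of nonnegative real numbers satisfying e_1 ≤ C and, for every s ≥ 2, e_s ≤ (1 − 2/(s+1)) e_{s−1} + (2/(s+1))² C. Then for every s ≥ 1, e_s ≤ 4C/(s + 2). -/
/-! With `t = s + 1`, one step of the recursion maps the bound `4C/t` on `e_{s-1}` to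
`(1 - 2/t)·4C/t + 4C/t² = 4C(t-1)/t²`, which is at most `4C/(t+1)` because `t² - 1 ≤ t²`. -/

lemma one_sub_two_div_mul_add_le_four_mul_div_add_one {C t x : ℝ} (hC : 0 ≤ C) (ht : 2 ≤ t)
    (hx : x ≤ 4 * C / t) :
    (1 - 2 / t) * x + (2 / t) ^ 2 * C ≤ 4 * C / (t + 1) := by
  have ht0 : 0 < t := by linarith
  have hcoef : 0 ≤ 1 - 2 / t := by rw [sub_nonneg, div_le_one ht0]; exact ht
  calc (1 - 2 / t) * x + (2 / t) ^ 2 * C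
      ≤ (1 - 2 / t) * (4 * C / t) + (2 / t) ^ 2 * C := by gcongr
    _ = 4 * C * (t - 1) / t ^ 2 := by field_simp; ring
    _ ≤ 4 * C / (t + 1) := by
      rw [div_le_div_iff₀ (by positivity) (by positivity)]
      nlinarith

theorem svrf_rate_induction_general (C : ℝ) (hC : 0 ≤ C) (e : ℕ → ℝ)
    (he1 : e 1 ≤ C)
    (hrec : ∀ s : ℕ, 2 ≤ s →
      e s ≤ (1 - 2 / ((s : ℝ) + 1)) * e (s - 1) + (2 / ((s : ℝ) + 1)) ^ 2 * C) :
    ∀ s : ℕ, 1 ≤ s → e s ≤ 4 * C / ((s : ℝ) + 2) := by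
  intro s hs
  induction s, hs using Nat.le_induction with
  | base => norm_num; linarith
  | succ n _ ih =>
    have hstep := hrec (n + 1) (by omega)
    rw [Nat.add_sub_cancel] at hstep
    have ht : (2 : ℝ) ≤ (n : ℝ) + 2 := by linarith [(Nat.cast_nonneg n : (0 : ℝ) ≤ n)]
    calc e (n + 1)
        ≤ (1 - 2 / ((n : ℝ) + 2)) * e n + (2 / ((n : ℝ) + 2)) ^ 2 * C := by
          convert hstep using 4 <;> push_cast <;> ring
      _ ≤ 4 * C / ((n : ℝ) + 2 + 1) :=
          one_sub_two_div_mul_add_le_four_mul_div_add_one hC ht ih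
      _ = 4 * C / (((n + 1 : ℕ) : ℝ) + 2) := by push_cast; ring

/-- The numerical induction used in the proof of Lemma 2 of the paper, with step
sizes `γ_s = 2/(s+1)`. -/
theorem svrf_rate_induction (C : ℝ) (hC : 0 ≤ C) (e : ℕ → ℝ)
    (he_nonneg : ∀ s, 0 ≤ e s)
    (he1 : e 1 ≤ C)
    (hrec : ∀ s : ℕ, 2 ≤ s →
      e s ≤ (1 - 2 / ((s : ℝ) + 1)) * e (s - 1) + (2 / ((s : ℝ) + 1)) ^ 2 * C) :
    ∀ s : ℕ, 1 ≤ s → e s ≤ 4 * C / ((s : ℝ) + 2) :=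
  svrf_rate_induction_general C hC e he1 hrec
end

section
/- Let (Ω, 𝓕, ℙ) be a probability space with a filtration (𝓕_s)_{s ≥ 1}, let (X_s)_{s ≥ 1} be a sequence of nonnegative integrable real random variables adapted to (𝓕_s), and let (b_s)_{s ≥ 1} be nonnegative real numbers with Σ_{s=1}^∞ b_s < ∞. Suppose 𝔼[X_s ∣ 𝓕_{s−1}] ≤ X_{s−1} + b_s almost surely for every s ≥ 2, and 𝔼[X_s] → 0 as s → ∞. Then X_s → 0 almost surely. -/
/-!
Subtracting the partial sums of `b` turns `X` into a supermartingale. It is bounded in `L¹`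
because both `𝔼[X s]` and the partial sums converge, so by Doob's convergence theorem it, and
hence `X`, converges almost surely. As `X ≥ 0` and `𝔼[X s] → 0`, `X` also tends to `0` in `L¹`,
hence in measure, so a subsequence tends to `0` almost surely; this identifies the limit.
-/

open MeasureTheory Filter Topology

namespace MeasureTheory

variable {Ω : Type*} {m0 : MeasurableSpace Ω} {μ : Measure Ω}

theorem supermartingale_sub_sum_range_of_condExp_le_add [IsFiniteMeasure μ]
    {ℱ : Filtration ℕ m0} {X : ℕ → Ω → ℝ} {b : ℕ → ℝ}
    (hadapted : Adapted ℱ X) (hint : ∀ s, Integrable (X s) μ)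
    (hcond : ∀ s, μ[X (s + 1) | ℱ s] ≤ᵐ[μ] fun ω => X s ω + b (s + 1)) :
    Supermartingale (fun s ω => X s ω - ∑ i ∈ Finset.range (s + 1), b i) ℱ μ := by
  refine supermartingale_nat (fun s => ((hadapted s).sub_const _).stronglyMeasurable)
    (fun s => (hint s).sub (integrable_const _)) fun s => ?_
  have hcondExp : μ[fun ω => X (s + 1) ω - ∑ i ∈ Finset.range (s + 2), b i | ℱ s]
      =ᵐ[μ] fun ω => μ[X (s + 1) | ℱ s] ω - ∑ i ∈ Finset.range (s + 2), b i := by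
    refine (condExp_sub (hint (s + 1)) (integrable_const _) (ℱ s)).trans ?_
    rw [condExp_const (ℱ.le s)]
    rfl
  filter_upwards [hcondExp, hcond s] with ω hω hle
  rw [hω, Finset.sum_range_succ _ (s + 1)]
  linarith

theorem eLpNorm_one_sub_const_le [IsProbabilityMeasure μ] {f : Ω → ℝ} (hf : Integrable f μ)
    (hf_nonneg : 0 ≤ᵐ[μ] f) (c : ℝ) :
    eLpNorm (fun ω => f ω - c) 1 μ ≤ ENNReal.ofReal (∫ ω, f ω ∂μ + |c|) := by
  have hfc : Integrable (fun ω => f ω - c) μ := hf.sub (integrable_const c)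
  rw [eLpNorm_one_eq_lintegral_enorm, ← ofReal_integral_norm_eq_lintegral_enorm hfc]
  refine ENNReal.ofReal_le_ofReal ?_
  calc ∫ ω, ‖f ω - c‖ ∂μ ≤ ∫ ω, f ω + |c| ∂μ := by
        refine integral_mono_ae hfc.norm (hf.add (integrable_const _)) ?_
        filter_upwards [hf_nonneg] with ω hω
        simpa [Real.norm_eq_abs, abs_of_nonneg hω] using abs_sub (f ω) c
    _ = ∫ ω, f ω ∂μ + |c| := by simp [integral_add hf (integrable_const _)]

theorem ae_exists_tendsto_of_condExp_le_add [IsProbabilityMeasure μ]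
    {ℱ : Filtration ℕ m0} {X : ℕ → Ω → ℝ} {b : ℕ → ℝ}
    (hadapted : Adapted ℱ X) (hint : ∀ s, Integrable (X s) μ)
    (hnonneg : ∀ s, 0 ≤ᵐ[μ] X s) {C : ℝ} (hbdd : ∀ s, ∫ ω, X s ω ∂μ ≤ C)
    (hsum : Summable b)
    (hcond : ∀ s, μ[X (s + 1) | ℱ s] ≤ᵐ[μ] fun ω => X s ω + b (s + 1)) :
    ∀ᵐ ω ∂μ, ∃ c, Tendsto (fun s => X s ω) atTop (𝓝 c) := by
  set S : ℕ → ℝ := fun s => ∑ i ∈ Finset.range (s + 1), b i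
  have hS : Tendsto S atTop (𝓝 (∑' i, b i)) :=
    hsum.hasSum.tendsto_sum_nat.comp (tendsto_add_atTop_nat 1)
  obtain ⟨D, hD⟩ := (continuous_abs.tendsto _ |>.comp hS).bddAbove_range
  have hY := supermartingale_sub_sum_range_of_condExp_le_add (μ := μ) hadapted hint hcond
  have hYbdd : ∀ s, eLpNorm ((-fun s ω => X s ω - S s) s) 1 μ ≤ (C + D).toNNReal := by
    intro s
    rw [Pi.neg_apply, eLpNorm_neg]
    refine (eLpNorm_one_sub_const_le (hint s) (hnonneg s) (S s)).trans ?_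
    exact ENNReal.ofReal_le_ofReal (add_le_add (hbdd s) (hD ⟨s, rfl⟩))
  filter_upwards [hY.neg.exists_ae_tendsto_of_bdd hYbdd] with ω ⟨c, hc⟩
  refine ⟨-c + ∑' i, b i, ?_⟩
  simpa [S] using hc.neg.add hS

theorem ae_tendsto_zero_of_integral_tendsto_zero {X : ℕ → Ω → ℝ}
    (hint : ∀ s, Integrable (X s) μ) (hnonneg : ∀ s, 0 ≤ᵐ[μ] X s)
    (hmean : Tendsto (fun s => ∫ ω, X s ω ∂μ) atTop (𝓝 0))
    (hconv : ∀ᵐ ω ∂μ, ∃ c, Tendsto (fun s => X s ω) atTop (𝓝 c)) :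
    ∀ᵐ ω ∂μ, Tendsto (fun s => X s ω) atTop (𝓝 0) := by
  have hL1 : Tendsto (fun s => eLpNorm (X s - 0) 1 μ) atTop (𝓝 0) := by
    have h : ∀ s, eLpNorm (X s) 1 μ = ENNReal.ofReal (∫ ω, X s ω ∂μ) := fun s => by
      rw [eLpNorm_one_eq_lintegral_enorm,
        ← ofReal_integral_norm_eq_lintegral_enorm (hint s)]
      congr 1
      refine integral_congr_ae ?_
      filter_upwards [hnonneg s] with ω hω using abs_of_nonneg hω
    simpa [h] using ENNReal.tendsto_ofReal hmean
  obtain ⟨ns, hns, hsub⟩ := (tendstoInMeasure_of_tendsto_eLpNorm one_ne_zero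
    (fun s => (hint s).aestronglyMeasurable) aestronglyMeasurable_zero hL1).exists_seq_tendsto_ae
  filter_upwards [hconv, hsub] with ω ⟨c, hc⟩ hω
  rwa [tendsto_nhds_unique (hc.comp hns.tendsto_atTop) hω] at hc

end MeasureTheory

-- The Lean index `s` is the paper's index `s + 1`.
theorem almost_supermartingale_tendsto_zero_general {Ω : Type*} {m0 : MeasurableSpace Ω}
    {μ : Measure Ω} [IsProbabilityMeasure μ]
    (ℱ : Filtration ℕ m0)
    (X : ℕ → Ω → ℝ)
    (hadapted : Adapted ℱ X)
    (hint : ∀ s, Integrable (X s) μ)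
    (hnonneg : ∀ s, ∀ᵐ ω ∂μ, 0 ≤ X s ω)
    (b : ℕ → ℝ) (hsum : Summable b)
    (hcond : ∀ s : ℕ,
      μ[X (s + 1) | ℱ s] ≤ᵐ[μ] fun ω => X s ω + b (s + 1))
    (hmean : Tendsto (fun s => ∫ ω, X s ω ∂μ) atTop (nhds 0)) :
    ∀ᵐ ω ∂μ, Tendsto (fun s => X s ω) atTop (nhds 0) := by
  obtain ⟨C, hC⟩ := hmean.bddAbove_range
  have hconv := ae_exists_tendsto_of_condExp_le_add hadapted hint hnonneg
    (fun s => hC ⟨s, rfl⟩) hsum hcond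
  exact ae_tendsto_zero_of_integral_tendsto_zero hint hnonneg hmean hconv

/-- Abstract content of Theorem 3 of the paper: a nonnegative adapted
almost-supermartingale with summable drift whose expectations tend to zero
converges to zero almost surely.  (The index is shifted so that the Lean index
`s` corresponds to the paper's index `s + 1`.) -/
theorem almost_supermartingale_tendsto_zero {Ω : Type*} {m0 : MeasurableSpace Ω}
    {μ : Measure Ω} [IsProbabilityMeasure μ]
    (ℱ : Filtration ℕ m0)
    (X : ℕ → Ω → ℝ)
    (hadapted : Adapted ℱ X)
    (hint : ∀ s, Integrable (X s) μ)
    (hnonneg : ∀ s, ∀ᵐ ω ∂μ, 0 ≤ X s ω)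
    (b : ℕ → ℝ) (hb : ∀ s, 0 ≤ b s) (hsum : Summable b)
    (hcond : ∀ s : ℕ,
      μ[X (s + 1) | ℱ s] ≤ᵐ[μ] fun ω => X s ω + b (s + 1))
    (hmean : Tendsto (fun s => ∫ ω, X s ω ∂μ) atTop (nhds 0)) :
    ∀ᵐ ω ∂μ, Tendsto (fun s => X s ω) atTop (nhds 0) :=
  almost_supermartingale_tendsto_zero_general ℱ X hadapted hint hnonneg b hsum hcond hmean
end
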